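/- arXiv:1505.03270 — 3 statements merged into one kernel-verified Lean document; each statement's English description precedes it below -/
import Mathlib

section
/- Let G be a group with identity e, K a loop with identity ε, and for each σ ∈ K let ψ_σ : G → G be a bijection with ψ_σ(e) = e, and ψ_ε = Id; equip K×G with the loop multiplication (α,a)∘(β,b) = (αβ, ψ_β(a)·b). Then the subgroup Ḡ = {(ε,a) : a ∈ G} is left nuclear if and only if ψ_β(ψ_α(x)·a) = ψ_{αβ}(x)·ψ_β(a) holds for all α, β ∈ K and all x, a ∈ G; in particular, if Ḡ is left nuclear then ψ_{αβ} = ψ_β ∘ ψ_α for all α, β ∈ K, i.e. σ ↦ ψ_σ is a homomorphism of K into the permutation group of G. -/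
universe u v

/-- A loop: a type with a multiplication all of whose left and right translations
are bijective, together with a two-sided identity element. -/
class MLoop (L : Type u) extends Mul L, One L where
  mul_left_bij : ∀ x : L, Function.Bijective fun y : L => x * y
  mul_right_bij : ∀ x : L, Function.Bijective fun y : L => y * x
  one_mul : ∀ x : L, 1 * x = x
  mul_one : ∀ x : L, x * 1 = x

instance (L : Type u) [MLoop L] : Nonempty L := ⟨1⟩

/-- Left division `x \ y = λ_x⁻¹ y`. -/
noncomputable def MLoop.ldiv {L : Type u} [MLoop L] (x y : L) : L :=
  Function.invFun (fun z : L => x * z) y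

/-- Right division `x / y = ρ_y⁻¹ x`. -/
noncomputable def MLoop.rdiv {L : Type u} [MLoop L] (x y : L) : L :=
  Function.invFun (fun z : L => z * y) x

/-- Middle inner mapping `T_x = ρ_x⁻¹ ∘ λ_x`, i.e. `T_x t` is the unique `z` with
`z * x = x * t`. -/
noncomputable def MLoop.midInner {L : Type u} [MLoop L] (x t : L) : L :=
  Function.invFun (fun z : L => z * x) (x * t)

/-- The left nucleus of a multiplicative structure. -/
def leftNucleus (L : Type u) [Mul L] : Set L :=
  {u : L | ∀ x y : L, u * x * y = u * (x * y)}

/-- The right nucleus of a multiplicative structure. -/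
def rightNucleus (L : Type u) [Mul L] : Set L :=
  {u : L | ∀ x y : L, x * y * u = x * (y * u)}

/-- The middle nucleus of a multiplicative structure. -/
def middleNucleus (L : Type u) [Mul L] : Set L :=
  {u : L | ∀ x y : L, x * u * y = x * (u * y)}

/-- A subset of a loop is a normal subloop if it is the kernel of a loop homomorphism. -/
def IsNormalSubloop {L : Type u} [MLoop L] (N : Set L) : Prop :=
  ∃ (M : Type u) (i : MLoop M) (f : L → M),
    (∀ x y : L, f (x * y) = i.toMul.mul (f x) (f y)) ∧ N = {x : L | f x = i.toOne.one}

/-- The data `(Θ, f)` of a Schreier extension of the group `G` by the loop `K`. -/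
structure SchreierData (K : Type u) (G : Type v) [MLoop K] [Group G] where
  Θ : K → G ≃* G
  f : K → K → G
  theta_one : Θ 1 = MulEquiv.refl G
  f_one_left : ∀ σ : K, f 1 σ = 1
  f_one_right : ∀ σ : K, f σ 1 = 1

/-- The multiplication of the Schreier loop `L(Θ,f)` on `K × G`:
`(τ,t)∘(σ,s) = (τσ, f(τ,σ)·Θ_σ(t)·s)`. -/
def SchreierData.mul {K : Type u} {G : Type v} [MLoop K] [Group G]
    (D : SchreierData K G) (p q : K × G) : K × G :=
  (p.1 * q.1, D.f p.1 q.1 * D.Θ q.1 p.2 * q.2)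

section TwistedProduct

variable {K G : Type*}

def twistedMul [Mul K] [Mul G] (ψ : K → G → G) (p q : K × G) : K × G :=
  (p.1 * q.1, ψ q.1 p.2 * q.2)

theorem twistedMul_one_left_assoc_iff [MLoop K] [Monoid G] (ψ : K → G → G) :
    (∀ a : G, ∀ x y : K × G,
        twistedMul ψ (twistedMul ψ (1, a) x) y = twistedMul ψ (1, a) (twistedMul ψ x y)) ↔
      ∀ α β : K, ∀ x a : G, ψ β (ψ α x * a) = ψ (α * β) x * ψ β a := by
  constructor
  · intro h α β x a
    -- a right factor `(β, 1)` contributes nothing beyond `β`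
    have hassoc := congrArg Prod.snd (h x (α, a) (β, 1))
    simpa only [twistedMul, MLoop.one_mul, mul_one] using hassoc
  · intro h a x y
    simp only [twistedMul, MLoop.one_mul, h x.1 y.1 a x.2, mul_assoc]

theorem comp_eq_of_map_mul_eq [Mul K] [MulOneClass G] {ψ : K → G → G}
    (hone : ∀ σ : K, ψ σ 1 = 1)
    (h : ∀ α β : K, ∀ x a : G, ψ β (ψ α x * a) = ψ (α * β) x * ψ β a) (α β : K) :
    ψ (α * β) = ψ β ∘ ψ α := by
  funext x
  simpa only [mul_one, hone, Function.comp_apply] using (h α β x 1).symm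

end TwistedProduct

theorem schreier_stmt2_general {K G : Type u} [MLoop K] [Group G]
    (ψ : K → G → G)
    (hone : ∀ σ : K, ψ σ 1 = 1) :
    let m : K × G → K × G → K × G := fun p q => (p.1 * q.1, ψ q.1 p.2 * q.2)
    ((∀ a : G, ∀ x y : K × G, m (m ((1 : K), a) x) y = m ((1 : K), a) (m x y)) ↔
      (∀ α β : K, ∀ x a : G, ψ β (ψ α x * a) = ψ (α * β) x * ψ β a)) ∧
    ((∀ a : G, ∀ x y : K × G, m (m ((1 : K), a) x) y = m ((1 : K), a) (m x y)) →
      ∀ α β : K, ψ (α * β) = ψ β ∘ ψ α) := by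
  have hnuclear := twistedMul_one_left_assoc_iff ψ
  exact ⟨hnuclear, fun h => comp_eq_of_map_mul_eq hone (hnuclear.mp h)⟩

/-- for the loop `(α,a)∘(β,b) = (αβ, ψ_β(a)·b)` on `K × G`, the subgroup
`Ḡ = {(ε,a) : a ∈ G}` is left nuclear iff `ψ_β(ψ_α(x)·a) = ψ_{αβ}(x)·ψ_β(a)` for all
`α β x a`; in particular, if `Ḡ` is left nuclear then `ψ_{αβ} = ψ_β ∘ ψ_α`, i.e.
`σ ↦ ψ_σ` is a homomorphism of `K` into the permutation group of `G`. -/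
theorem schreier_stmt2 {K G : Type u} [MLoop K] [Group G]
    (ψ : K → G → G)
    (hbij : ∀ σ : K, Function.Bijective (ψ σ))
    (hone : ∀ σ : K, ψ σ 1 = 1)
    (hid : ψ 1 = id) :
    let m : K × G → K × G → K × G := fun p q => (p.1 * q.1, ψ q.1 p.2 * q.2)
    ((∀ a : G, ∀ x y : K × G, m (m ((1 : K), a) x) y = m ((1 : K), a) (m x y)) ↔
      (∀ α β : K, ∀ x a : G, ψ β (ψ α x * a) = ψ (α * β) x * ψ β a)) ∧
    ((∀ a : G, ∀ x y : K × G, m (m ((1 : K), a) x) y = m ((1 : K), a) (m x y)) →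
      ∀ α β : K, ψ (α * β) = ψ β ∘ ψ α) :=
  schreier_stmt2_general ψ hone
end

section
/- A loop L has a Schreier decomposition with respect to a normal subgroup G if and only if G is middle and right nuclear in L. -/
universe u v

/-!
A Schreier loop `L(Θ,f)` contains `{ε} × G` as a copy of `G`, and the formula for `∘` shows at
once that `(x ∘ (ε,t)) ∘ y = x ∘ ((ε,t) ∘ y)` and `(x ∘ y) ∘ (ε,t) = x ∘ (y ∘ (ε,t))`; these
identities survive the isomorphism onto `L`.

Conversely, let `G` be the kernel of `π : L → K` (with `K` the image of the homomorphism
defining normality) and pick a section `s` of `π` with `s ε = 1`. Every `x ∈ L` is uniquely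
`s σ · t` with `t ∈ G`. Conjugating `G` past `s σ` defines `Θ_σ` by `s σ · Θ_σ(t) = t · s σ`,
and `f` is defined by `s (τσ) · f(τ,σ) = s τ · s σ`. Because `G` is middle and right nuclear,
`Θ_σ` is an automorphism of `G` and `(τ,t) ↦ s τ · t` turns `∘` into the product of `L`.
-/

namespace MLoop

variable {L M : Type u} [MLoop L] [MLoop M]

instance : IsCancelMul L where
  mul_left_cancel a := (mul_left_bij a).1
  mul_right_cancel a := (mul_right_bij a).1

theorem mul_ldiv (x y : L) : x * ldiv x y = y :=
  Function.invFun_eq ((mul_left_bij x).2 y)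

theorem rdiv_mul (x y : L) : rdiv x y * y = x :=
  Function.invFun_eq ((mul_right_bij y).2 x)

theorem map_one_of_map_mul {φ : L → M} (hφ : ∀ x y, φ (x * y) = φ x * φ y) : φ 1 = 1 :=
  mul_left_cancel (a := φ 1) (by rw [← hφ, one_mul, mul_one])

noncomputable abbrev rangeLoop {φ : L → M} (hφ : ∀ x y, φ (x * y) = φ x * φ y) :
    MLoop (Set.range φ) where
  mul a b := ⟨a * b, by
    obtain ⟨⟨x, hx⟩, ⟨y, hy⟩⟩ := And.intro a.2 b.2
    exact ⟨x * y, by rw [hφ, hx, hy]⟩⟩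
  one := ⟨1, 1, map_one_of_map_mul hφ⟩
  mul_left_bij a := by
    refine ⟨fun b c h => Subtype.ext (mul_left_cancel (congrArg Subtype.val h)), ?_⟩
    rintro ⟨_, z, rfl⟩
    obtain ⟨x, hx⟩ := a.2
    exact ⟨⟨φ (ldiv x z), _, rfl⟩, Subtype.ext (by
      change a.1 * φ (ldiv x z) = φ z
      rw [← hx, ← hφ, mul_ldiv])⟩
  mul_right_bij a := by
    refine ⟨fun b c h => Subtype.ext (mul_right_cancel (congrArg Subtype.val h)), ?_⟩
    rintro ⟨_, z, rfl⟩
    obtain ⟨x, hx⟩ := a.2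
    exact ⟨⟨φ (rdiv z x), _, rfl⟩, Subtype.ext (by
      change φ (rdiv z x) * a.1 = φ z
      rw [← hx, ← hφ, rdiv_mul])⟩
  one_mul a := Subtype.ext (one_mul a.1)
  mul_one a := Subtype.ext (mul_one a.1)

end MLoop

namespace SchreierData

variable {K : Type u} {H : Type v} [MLoop K] [Group H] (D : SchreierData K H)

theorem mul_one_mk (p : K × H) (t : H) : D.mul p (1, t) = (p.1, p.2 * t) := by
  simp [SchreierData.mul, D.f_one_right, D.theta_one, MLoop.mul_one]

theorem one_mk_mul (t : H) (q : K × H) : D.mul (1, t) q = (q.1, D.Θ q.1 t * q.2) := by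
  simp [SchreierData.mul, D.f_one_left, MLoop.one_mul]

theorem mul_assoc_one_mk_middle (p q : K × H) (t : H) :
    D.mul (D.mul p (1, t)) q = D.mul p (D.mul (1, t) q) := by
  rw [mul_one_mk, one_mk_mul]
  simp only [SchreierData.mul, map_mul, mul_assoc]

theorem mul_assoc_one_mk_right (p q : K × H) (t : H) :
    D.mul (D.mul p q) (1, t) = D.mul p (D.mul q (1, t)) := by
  rw [mul_one_mk, mul_one_mk]
  simp only [SchreierData.mul, mul_assoc]

theorem map_one_mk_mem_nuclei {L : Type u} [Mul L] {F : K × H → L}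
    (hF : Function.Surjective F) (hFmul : ∀ p q, F (D.mul p q) = F p * F q) (t : H) :
    F (1, t) ∈ middleNucleus L ∩ rightNucleus L := by
  refine ⟨fun x y => ?_, fun x y => ?_⟩ <;>
    obtain ⟨⟨p, rfl⟩, ⟨q, rfl⟩⟩ := And.intro (hF x) (hF y)
  · rw [← hFmul, ← hFmul, D.mul_assoc_one_mk_middle, hFmul, hFmul]
  · rw [← hFmul, ← hFmul, D.mul_assoc_one_mk_right, hFmul, hFmul]

end SchreierData

theorem exists_rightInverse_map_one {α β : Type*} [One α] [One β] {π : α → β}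
    (hπ : Function.Surjective π) (h1 : π 1 = 1) : ∃ s : β → α, (∀ k, π (s k) = k) ∧ s 1 = 1 := by
  classical
  refine ⟨Function.update (Function.surjInv hπ) 1 1, fun k => ?_, Function.update_self ..⟩
  rcases eq_or_ne k 1 with rfl | hk
  · rw [Function.update_self, h1]
  · rw [Function.update_of_ne hk, Function.surjInv_eq hπ]

section Kernel

variable {L K : Type u} [MLoop L] [MLoop K] {G : Set L} {π : L → K}

theorem exists_mulEquiv_mul_eq_mul [Group G]
    (hGmul : ∀ a b : G, ((a * b : G) : L) = (a : L) * (b : L))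
    (hnuc : G ⊆ middleNucleus L ∩ rightNucleus L) (x : L)
    (hleft : ∀ t : G, ∃ t' : G, x * t' = t * x) (hright : ∀ t' : G, ∃ t : G, t * x = x * t') :
    ∃ Θ : G ≃* G, ∀ t : G, x * Θ t = t * x := by
  choose Θ hΘ using hleft
  have hΘmul (t t' : G) : Θ (t * t') = Θ t * Θ t' := by
    refine Subtype.ext (mul_left_cancel (a := x) ?_)
    calc x * Θ (t * t') = t * t' * x := by rw [hΘ, hGmul]
      _ = t * (t' * x) := (hnuc t'.2).1 _ _
      _ = t * x * Θ t' := by rw [← hΘ, (hnuc (Θ t').2).2]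
      _ = x * (Θ t * Θ t' : G) := by rw [← hΘ, hGmul, (hnuc (Θ t).2).1]
  have hΘinj : Function.Injective Θ := fun t t' h =>
    Subtype.ext (mul_right_cancel (b := x) (by rw [← hΘ, ← hΘ, h]))
  have hΘsurj : Function.Surjective Θ := fun t' => by
    obtain ⟨t, ht⟩ := hright t'
    exact ⟨t, Subtype.ext (mul_left_cancel (by rw [hΘ, ht]))⟩
  exact ⟨MulEquiv.ofBijective (⟨Θ, hΘmul⟩ : G →ₙ* G) ⟨hΘinj, hΘsurj⟩, hΘ⟩

theorem section_mul_schreier_mul [Group G]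
    (hGmul : ∀ a b : G, ((a * b : G) : L) = (a : L) * (b : L))
    (hnuc : G ⊆ middleNucleus L ∩ rightNucleus L) {s : K → L} {Θ : K → G ≃* G}
    {f : K → K → G} (hΘ : ∀ k t, s k * Θ k t = t * s k)
    (hf : ∀ k k', s (k * k') * f k k' = s k * s k') (k k' : K) (t t' : G) :
    s (k * k') * ((f k k' * Θ k' t * t' : G) : L) = s k * t * (s k' * t') := by
  have mid (u : G) (x y : L) : x * u * y = x * (u * y) := (hnuc u.2).1 x y
  have right (u : G) (x y : L) : x * y * u = x * (y * u) := (hnuc u.2).2 x y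
  calc s (k * k') * ((f k k' * Θ k' t * t' : G) : L)
      = s (k * k') * (f k k' * Θ k' t) * t' := by rw [hGmul, hGmul]; exact (right t' _ _).symm
    _ = s k * s k' * Θ k' t * t' := by rw [← mid (f k k'), hf]
    _ = s k * (t * s k') * t' := by rw [right (Θ k' t), hΘ]
    _ = s k * t * (s k' * t') := by rw [← mid t, right t']

theorem exists_mul_mem_eq_of_map_eq (hπ : ∀ x y, π (x * y) = π x * π y)
    (hker : ∀ x, x ∈ G ↔ π x = 1) {a b : L} (h : π a = π b) : ∃ t : G, a * t = b :=
  ⟨⟨MLoop.ldiv a b, (hker _).2 (mul_left_cancel (a := π a) (by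
    rw [← hπ, MLoop.mul_ldiv, h, MLoop.mul_one]))⟩, MLoop.mul_ldiv a b⟩

theorem exists_mem_mul_eq_of_map_eq (hπ : ∀ x y, π (x * y) = π x * π y)
    (hker : ∀ x, x ∈ G ↔ π x = 1) {a b : L} (h : π a = π b) : ∃ t : G, t * a = b :=
  ⟨⟨MLoop.rdiv b a, (hker _).2 (mul_right_cancel (b := π a) (by
    rw [← hπ, MLoop.rdiv_mul, h, MLoop.one_mul]))⟩, MLoop.rdiv_mul b a⟩

theorem map_mul_mem (hπ : ∀ x y, π (x * y) = π x * π y)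
    (hker : ∀ x, x ∈ G ↔ π x = 1) (x : L) (t : G) : π (x * t) = π x := by
  rw [hπ, (hker _).1 t.2, MLoop.mul_one]

theorem map_mem_mul (hπ : ∀ x y, π (x * y) = π x * π y)
    (hker : ∀ x, x ∈ G ↔ π x = 1) (t : G) (x : L) : π (t * x) = π x := by
  rw [hπ, (hker _).1 t.2, MLoop.one_mul]

theorem bijective_section_mul (hπ : ∀ x y, π (x * y) = π x * π y)
    (hker : ∀ x, x ∈ G ↔ π x = 1) {s : K → L} (hs : ∀ k, π (s k) = k) :
    Function.Bijective fun p : K × G => s p.1 * p.2 := by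
  refine ⟨fun ⟨k, t⟩ ⟨k', t'⟩ h => ?_, fun x => ?_⟩
  · have hk : k = k' := by
      simpa only [map_mul_mem hπ hker, hs] using congrArg π h
    subst hk
    exact Prod.ext rfl (Subtype.ext (mul_left_cancel h))
  · obtain ⟨t, ht⟩ := exists_mul_mem_eq_of_map_eq hπ hker (hs (π x))
    exact ⟨(π x, t), ht⟩

theorem exists_schreierDecomposition [Group G]
    (hGmul : ∀ a b : G, ((a * b : G) : L) = (a : L) * (b : L)) (hGone : ((1 : G) : L) = 1)
    (hπ : ∀ x y, π (x * y) = π x * π y) (hπsurj : Function.Surjective π)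
    (hker : ∀ x, x ∈ G ↔ π x = 1) (hnuc : G ⊆ middleNucleus L ∩ rightNucleus L) :
    ∃ (D : SchreierData K G) (F : K × G → L), Function.Bijective F ∧
      (∀ p q, F (D.mul p q) = F p * F q) ∧ ∀ t : G, F (1, t) = t := by
  obtain ⟨s, hs, hs1⟩ := exists_rightInverse_map_one hπsurj (MLoop.map_one_of_map_mul hπ)
  have hΘ (k : K) : ∃ Θ : G ≃* G, ∀ t : G, s k * Θ t = t * s k :=
    exists_mulEquiv_mul_eq_mul hGmul hnuc (s k)
      (fun t => exists_mul_mem_eq_of_map_eq hπ hker (map_mem_mul hπ hker t _).symm)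
      (fun t' => exists_mem_mul_eq_of_map_eq hπ hker (map_mul_mem hπ hker _ t').symm)
  choose Θ hΘ using hΘ
  have hf (k k' : K) : ∃ f : G, s (k * k') * f = s k * s k' :=
    exists_mul_mem_eq_of_map_eq hπ hker (by rw [hπ, hs, hs, hs])
  choose f hf using hf
  have hΘ_one : Θ 1 = MulEquiv.refl G := MulEquiv.ext fun t => Subtype.ext <|
    mul_left_cancel (a := s 1) (by rw [hΘ, hs1, MLoop.mul_one, MLoop.one_mul]; rfl)
  have hf_one_left (σ : K) : f 1 σ = 1 := Subtype.ext <| mul_left_cancel (a := s σ) <| by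
    simpa only [MLoop.one_mul, hs1, hGone, MLoop.mul_one] using hf 1 σ
  have hf_one_right (σ : K) : f σ 1 = 1 := Subtype.ext <| mul_left_cancel (a := s σ) <| by
    simpa only [MLoop.mul_one, hs1, hGone] using hf σ 1
  refine ⟨⟨Θ, f, hΘ_one, hf_one_left, hf_one_right⟩, fun p => s p.1 * p.2,
    bijective_section_mul hπ hker hs,
    fun ⟨k, t⟩ ⟨k', t'⟩ => section_mul_schreier_mul hGmul hnuc hΘ hf k k' t t', fun t => ?_⟩
  dsimp only
  rw [hs1, MLoop.one_mul]

end Kernel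

/-- a loop `L` has a Schreier decomposition with respect to a normal
subgroup `G` (an isomorphism `F : L(Θ,f) → L` from some Schreier loop on `K × G` with
`F(ε,t) = t` for all `t ∈ G`) if and only if `G` is middle and right nuclear in `L`. -/
theorem schreier_stmt12 {L : Type u} [MLoop L] (G : Set L) [Group G]
    (hGmul : ∀ a b : G, ((a * b : G) : L) = (a : L) * (b : L))
    (hGone : ((1 : G) : L) = 1)
    (hnorm : IsNormalSubloop G) :
    (∃ (K : Type u) (iK : MLoop K) (D : @SchreierData K (↥G) iK _)
        (F : K × G → L),
      Function.Bijective F ∧ (∀ p q : K × G, F (D.mul p q) = F p * F q) ∧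
      ∀ t : G, F (iK.toOne.one, t) = (t : L)) ↔
    G ⊆ middleNucleus L ∩ rightNucleus L := by
  constructor
  · rintro ⟨K, iK, D, F, hF, hFmul, hF1⟩ u hu
    have h := D.map_one_mk_mem_nuclei hF.2 hFmul ⟨u, hu⟩
    rwa [show F (1, ⟨u, hu⟩) = u from hF1 _] at h
  · intro hnuc
    obtain ⟨M, iM, φ, hφ, hker⟩ := hnorm
    let := MLoop.rangeLoop hφ
    exact ⟨Set.range φ, _, exists_schreierDecomposition hGmul hGone
      (π := Set.rangeFactorization φ) (fun x y => Subtype.ext (hφ x y))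
      Set.rangeFactorization_surjective (fun x => by rw [hker, Subtype.ext_iff]; rfl) hnuc⟩
end

section
/- If G is a middle and right nuclear normal subgroup of a loop L, then for all x ∈ L and r ∈ G the restricted middle inner mappings decompose as T_{x·r}|_G = T_x|_G ∘ ι_r and T_{r·x}|_G = ι_r ∘ T_x|_G, where ι_r is the inner automorphism ι_r(t) = r·t·r^{-1} of G. -/
universe u v

/-! Since `G` lies in the middle and right nuclei, the relation `(r t r⁻¹) r = r t` can be moved
across `x` by reassociating, which identifies `T_{xr}(t)` with `T_x(r t r⁻¹)`; symmetrically,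
`(r s r⁻¹)(r x) = r (s x) = r (x t) = (r x) t` for `s = T_x(t)`. -/

theorem map_conj_mul_map {G M : Type*} [Group G] [Mul M] (f : G → M)
    (hf : ∀ a b : G, f (a * b) = f a * f b) (a b : G) :
    f (a * b * a⁻¹) * f a = f a * f b := by
  rw [← hf, ← hf, inv_mul_cancel_right]

namespace MLoop

variable {L : Type u} [MLoop L]

theorem midInner_mul_self (x t : L) : midInner x t * x = x * t :=
  Function.invFun_eq (f := fun z : L => z * x) ((mul_right_bij x).surjective (x * t))

theorem midInner_eq_of_mul_eq {x t z : L} (h : z * x = x * t) : midInner x t = z :=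
  (mul_right_bij x).injective ((midInner_mul_self x t).trans h.symm)

theorem midInner_mul_right {x r t u : L} (hrm : r ∈ middleNucleus L)
    (hrr : r ∈ rightNucleus L) (hu : u * r = r * t) :
    midInner (x * r) t = midInner x u := by
  apply midInner_eq_of_mul_eq
  calc midInner x u * (x * r) = midInner x u * x * r := (hrr _ x).symm
    _ = x * u * r := by rw [midInner_mul_self]
    _ = x * (r * t) := by rw [hrr, hu]
    _ = x * r * t := (hrm x t).symm

theorem midInner_mul_left {x r t s v : L} (hrm : r ∈ middleNucleus L)
    (hsm : s ∈ middleNucleus L) (htr : t ∈ rightNucleus L) (hs : midInner x t = s)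
    (hv : v * r = r * s) :
    midInner (r * x) t = v := by
  apply midInner_eq_of_mul_eq
  calc v * (r * x) = r * s * x := by rw [← hrm, hv]
    _ = r * (x * t) := by rw [hsm, ← hs, midInner_mul_self]
    _ = r * x * t := (htr r x).symm

end MLoop

theorem schreier_stmt14_general {L : Type u} [MLoop L] (G : Set L) [Group G]
    (hGmul : ∀ a b : G, ((a * b : G) : L) = (a : L) * (b : L))
    (hnuc : G ⊆ middleNucleus L ∩ rightNucleus L) :
    ∀ (x : L) (r t : G),
      MLoop.midInner (x * (r : L)) (t : L)
        = MLoop.midInner x ((r * t * r⁻¹ : G) : L) ∧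
      ∀ s : G, MLoop.midInner x (t : L) = (s : L) →
        MLoop.midInner ((r : L) * x) (t : L) = ((r * s * r⁻¹ : G) : L) := by
  intro x r t
  have conj := map_conj_mul_map (fun a : G => (a : L)) hGmul r
  exact ⟨MLoop.midInner_mul_right (hnuc r.2).1 (hnuc r.2).2 (conj t), fun s hs =>
    MLoop.midInner_mul_left (hnuc r.2).1 (hnuc s.2).1 (hnuc t.2).2 hs (conj s)⟩

/-- if `G` is a middle and right nuclear normal subgroup of a loop `L`,
then for all `x ∈ L` and `r ∈ G` the restricted middle inner mappings decompose as
`T_{x·r}|_G = T_x|_G ∘ ι_r` and `T_{r·x}|_G = ι_r ∘ T_x|_G`, where `ι_r(t) = r·t·r⁻¹`. -/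
theorem schreier_stmt14 {L : Type u} [MLoop L] (G : Set L) [Group G]
    (hGmul : ∀ a b : G, ((a * b : G) : L) = (a : L) * (b : L))
    (hGone : ((1 : G) : L) = 1)
    (hnorm : IsNormalSubloop G)
    (hnuc : G ⊆ middleNucleus L ∩ rightNucleus L) :
    ∀ (x : L) (r t : G),
      MLoop.midInner (x * (r : L)) (t : L)
        = MLoop.midInner x ((r * t * r⁻¹ : G) : L) ∧
      ∀ s : G, MLoop.midInner x (t : L) = (s : L) →
        MLoop.midInner ((r : L) * x) (t : L) = ((r * s * r⁻¹ : G) : L) :=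
  schreier_stmt14_general G hGmul hnuc
end
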